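/- If two multivariate normal clusters satisfy Σ₁ = λΣ₂ for some λ > 0, then the LDA axis a_LDA = ((Σ₁+Σ₂)/2)⁻¹(μ₂−μ₁) minimizes, over all nonzero axes a ∈ ℝ^p, the equalized misclassification error 1 − Φ(aᵀ(μ₂−μ₁)/(√(aᵀΣ₁a) + √(aᵀΣ₂a))); equivalently, a_LDA maximizes the separation quantile q(a) = aᵀ(μ₂−μ₁)/(√(aᵀΣ₁a)+√(aᵀΣ₂a)). -/

import Mathlib

open Matrix

/-! When `Σ₁ = λΣ₂`, the denominator of `q(a)` is `(√λ + 1)‖a‖` for the norm `‖a‖² = aᵀΣ₂a`,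
and the numerator is the `Σ₂`-inner product of `a` with `b = Σ₂⁻¹(μ₂ − μ₁)`. So by
Cauchy–Schwarz `q(a) ≤ ‖b‖/(√λ + 1) = q(b)`, and the LDA axis is a positive multiple of `b`,
on which `q` takes the same value. -/

/-- The separation quantile `q(a) = aᵀ(μ₂−μ₁)/(√(aᵀΣ₁a)+√(aᵀΣ₂a))`. -/
noncomputable def separationQuantile {p : ℕ} (μ₁ μ₂ : Fin p → ℝ)
    (S₁ S₂ : Matrix (Fin p) (Fin p) ℝ) (a : Fin p → ℝ) : ℝ :=
  a ⬝ᵥ (μ₂ - μ₁) / (Real.sqrt (a ⬝ᵥ S₁.mulVec a) + Real.sqrt (a ⬝ᵥ S₂.mulVec a))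

lemma Matrix.PosSemidef.dotProduct_mulVec_le_sqrt_mul_sqrt {n : Type*} [Fintype n]
    {S : Matrix n n ℝ} (hS : S.PosSemidef) (a b : n → ℝ) :
    a ⬝ᵥ S *ᵥ b ≤ √(a ⬝ᵥ S *ᵥ a) * √(b ⬝ᵥ S *ᵥ b) := by
  classical
  have hsymm : b ⬝ᵥ S *ᵥ a = a ⬝ᵥ S *ᵥ b := by
    rw [dotProduct_mulVec, ← mulVec_transpose, show Sᵀ = S from hS.1, dotProduct_comm]
  have hnonneg (x : n → ℝ) : 0 ≤ x ⬝ᵥ S *ᵥ x := by simpa using hS.dotProduct_mulVec_nonneg x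
  rw [← Real.sqrt_mul (hnonneg a)]
  refine Real.le_sqrt_of_sq_le ?_
  have hcs := LinearMap.BilinForm.apply_mul_apply_le_of_forall_zero_le (toLinearMap₂' ℝ S)
    (by simpa [toLinearMap₂'_apply'] using hnonneg) a b
  simpa [toLinearMap₂'_apply', hsymm, sq] using hcs

section Field

variable {K n : Type*} [Field K] [Fintype n] [DecidableEq n]

lemma Matrix.inv_smul_of_ne_zero {S : Matrix n n K} {c : K} (hc : c ≠ 0)
    (hS : IsUnit S.det) : (c • S)⁻¹ = c⁻¹ • S⁻¹ :=
  inv_smul' S (Units.mk0 c hc) hS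

lemma Matrix.div_two_eq_smul [NeZero (2 : K)] (A : Matrix n n K) : A / 2 = (2⁻¹ : K) • A := by
  have : (2 : Matrix n n K)⁻¹ = (2⁻¹ : K) • 1 := by
    rw [show (2 : Matrix n n K) = (2 : K) • 1 by rw [two_smul, one_add_one_eq_two]]
    simpa using inv_smul_of_ne_zero (S := (1 : Matrix n n K)) two_ne_zero (by simp)
  rw [div_eq_mul_inv, this, mul_smul_comm, mul_one]

lemma Matrix.inv_smul_div_two [NeZero (2 : K)] {S : Matrix n n K} {c : K} (hc : c ≠ 0)
    (hS : IsUnit S.det) : ((c • S) / 2)⁻¹ = (2 / c) • S⁻¹ := by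
  rw [div_two_eq_smul, smul_smul,
    inv_smul_of_ne_zero (mul_ne_zero (inv_ne_zero two_ne_zero) hc) hS,
    mul_inv, inv_inv, div_eq_mul_inv, mul_comm]

end Field

section SeparationQuantile

variable {p : ℕ} {μ₁ μ₂ : Fin p → ℝ} {S₁ S₂ : Matrix (Fin p) (Fin p) ℝ}

lemma separationQuantile_smul {c : ℝ} (hc : 0 < c) (a : Fin p → ℝ) :
    separationQuantile μ₁ μ₂ S₁ S₂ (c • a) = separationQuantile μ₁ μ₂ S₁ S₂ a := by
  have hsqrt (x : ℝ) : √(c * (c * x)) = c * √x := by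
    rw [← mul_assoc, Real.sqrt_mul (mul_self_nonneg c), Real.sqrt_mul_self hc.le]
  simp only [separationQuantile, mulVec_smul, dotProduct_smul, smul_dotProduct, smul_eq_mul,
    hsqrt, ← mul_add]
  exact mul_div_mul_left _ _ hc.ne'

lemma separationQuantile_of_eq_smul {l : ℝ} (hl : 0 ≤ l) (hS : S₁ = l • S₂)
    (a : Fin p → ℝ) :
    separationQuantile μ₁ μ₂ S₁ S₂ a
      = a ⬝ᵥ (μ₂ - μ₁) / ((√l + 1) * √(a ⬝ᵥ S₂ *ᵥ a)) := by
  rw [separationQuantile, hS, smul_mulVec, dotProduct_smul, smul_eq_mul, Real.sqrt_mul hl,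
    add_one_mul]

lemma separationQuantile_le_of_eq_smul (h₂ : S₂.PosSemidef) (hdet : IsUnit S₂.det) {l : ℝ}
    (hl : 0 ≤ l) (hS : S₁ = l • S₂) (a : Fin p → ℝ) :
    separationQuantile μ₁ μ₂ S₁ S₂ a ≤ √((μ₂ - μ₁) ⬝ᵥ S₂⁻¹ *ᵥ (μ₂ - μ₁)) / (√l + 1) := by
  set b := S₂⁻¹ *ᵥ (μ₂ - μ₁)
  have hb : S₂ *ᵥ b = μ₂ - μ₁ := by rw [mulVec_mulVec, mul_nonsing_inv _ hdet, one_mulVec]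
  rw [separationQuantile_of_eq_smul hl hS, mul_comm, ← div_div]
  gcongr
  refine div_le_of_le_mul₀ (Real.sqrt_nonneg _) (Real.sqrt_nonneg _) ?_
  calc a ⬝ᵥ (μ₂ - μ₁) = a ⬝ᵥ S₂ *ᵥ b := by rw [hb]
    _ ≤ √(a ⬝ᵥ S₂ *ᵥ a) * √(b ⬝ᵥ S₂ *ᵥ b) := h₂.dotProduct_mulVec_le_sqrt_mul_sqrt a b
    _ = √((μ₂ - μ₁) ⬝ᵥ b) * √(a ⬝ᵥ S₂ *ᵥ a) := by rw [hb, dotProduct_comm b, mul_comm]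

lemma separationQuantile_inv_mulVec_of_eq_smul (hdet : IsUnit S₂.det) {l : ℝ} (hl : 0 ≤ l)
    (hS : S₁ = l • S₂) :
    separationQuantile μ₁ μ₂ S₁ S₂ (S₂⁻¹ *ᵥ (μ₂ - μ₁))
      = √((μ₂ - μ₁) ⬝ᵥ S₂⁻¹ *ᵥ (μ₂ - μ₁)) / (√l + 1) := by
  rw [separationQuantile_of_eq_smul hl hS, mulVec_mulVec, mul_nonsing_inv _ hdet, one_mulVec,
    dotProduct_comm, mul_comm, ← div_div, Real.div_sqrt]

end SeparationQuantile

theorem lda_axis_maximizes_separation_general {p : ℕ}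
    (μ₁ μ₂ : Fin p → ℝ)
    (S₁ S₂ : Matrix (Fin p) (Fin p) ℝ) (h₂ : S₂.PosDef)
    (l : ℝ) (hl : 0 < l) (hS : S₁ = l • S₂) :
    ∀ a : Fin p → ℝ, a ≠ 0 →
      separationQuantile μ₁ μ₂ S₁ S₂ a
        ≤ separationQuantile μ₁ μ₂ S₁ S₂ (((S₁ + S₂) / 2)⁻¹.mulVec (μ₂ - μ₁)) := by
  intro a _
  have hdet : IsUnit S₂.det := h₂.det_pos.ne'.isUnit
  have hlda : ((S₁ + S₂) / 2)⁻¹ *ᵥ (μ₂ - μ₁) = (2 / (l + 1)) • (S₂⁻¹ *ᵥ (μ₂ - μ₁)) := by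
    rw [hS, show l • S₂ + S₂ = (l + 1) • S₂ by rw [add_smul, one_smul],
      inv_smul_div_two (by positivity) hdet, smul_mulVec]
  rw [hlda, separationQuantile_smul (by positivity),
    separationQuantile_inv_mulVec_of_eq_smul hdet hl.le hS]
  exact separationQuantile_le_of_eq_smul h₂.posSemidef hdet hl.le hS a

/-- If `Σ₁ = λΣ₂` with `λ > 0`, then the LDA axis `a_LDA = ((Σ₁+Σ₂)/2)⁻¹(μ₂−μ₁)`
maximizes the separation quantile `q(a)` over all nonzero axes `a`; equivalently
(since `Φ` is strictly increasing), it minimizes the equalized misclassification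
error `1 − Φ(q(a))`. -/
theorem lda_axis_maximizes_separation {p : ℕ}
    (μ₁ μ₂ : Fin p → ℝ) (hμ : μ₁ ≠ μ₂)
    (S₁ S₂ : Matrix (Fin p) (Fin p) ℝ) (h₂ : S₂.PosDef)
    (l : ℝ) (hl : 0 < l) (hS : S₁ = l • S₂) :
    ∀ a : Fin p → ℝ, a ≠ 0 →
      separationQuantile μ₁ μ₂ S₁ S₂ a
        ≤ separationQuantile μ₁ μ₂ S₁ S₂ (((S₁ + S₂) / 2)⁻¹.mulVec (μ₂ - μ₁)) :=
  lda_axis_maximizes_separation_general μ₁ μ₂ S₁ S₂ h₂ l hl hS
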